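/- arXiv:1710.08012 — 7 statements merged into one kernel-verified Lean document; each statement's English description precedes it below -/
import Mathlib

section
/- Let S, A be finite, γ ∈ [0,1). Suppose two MDP models on the same S, A satisfy ‖P(s,a) − P'(s,a)‖₁ ≤ ε_p and |R(s,a) − R'(s,a)| ≤ ε_R for all (s,a), and that the optimal Q-values of both models are bounded by V_max in sup norm. Then the optimal Q-values Q* and Q'* of the two models satisfy ‖Q* − Q'*‖_∞ ≤ (ε_R + γ·V_max·ε_p) / (1 − γ). -/
/-- Simulation-lemma-style perturbation bound: if two finite MDP models have rewards within
`ε_R` and transition vectors within `ε_p` in L1 norm, and their optimal Q-values are bounded by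
`V_max`, then the optimal Q-values differ by at most `(ε_R + γ V_max ε_p)/(1-γ)` in sup norm. -/
theorem stmt_8 {S A : Type*} [Fintype S] [Fintype A] [Nonempty S] [Nonempty A]
    (γ : ℝ) (hγ : γ ∈ Set.Ico (0 : ℝ) 1)
    (R R' : S → A → ℝ) (p p' : S → A → S → ℝ)
    (hp0 : ∀ s a s', 0 ≤ p s a s') (hp1 : ∀ s a, ∑ s', p s a s' = 1)
    (hp0' : ∀ s a s', 0 ≤ p' s a s') (hp1' : ∀ s a, ∑ s', p' s a s' = 1)
    (εp εR Vmax : ℝ)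
    (hclose_p : ∀ s a, ∑ s', |p s a s' - p' s a s'| ≤ εp)
    (hclose_R : ∀ s a, |R s a - R' s a| ≤ εR)
    (Qstar Qstar' : S × A → ℝ)
    (hfix : ∀ sa : S × A, Qstar sa = R sa.1 sa.2 + γ * ∑ s', p sa.1 sa.2 s' *
      (Finset.univ.sup' Finset.univ_nonempty (fun a' => Qstar (s', a'))))
    (hfix' : ∀ sa : S × A, Qstar' sa = R' sa.1 sa.2 + γ * ∑ s', p' sa.1 sa.2 s' *
      (Finset.univ.sup' Finset.univ_nonempty (fun a' => Qstar' (s', a'))))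
    (hbdd : ∀ sa, |Qstar sa| ≤ Vmax) (hbdd' : ∀ sa, |Qstar' sa| ≤ Vmax) :
    ∀ sa : S × A, |Qstar sa - Qstar' sa| ≤ (εR + γ * Vmax * εp) / (1 - γ) := by
  obtain ⟨hγ0, hγ1⟩ := hγ
  set V : S → ℝ := fun s => Finset.univ.sup' Finset.univ_nonempty (fun a' => Qstar (s, a'))
    with hVdef
  set V' : S → ℝ := fun s => Finset.univ.sup' Finset.univ_nonempty (fun a' => Qstar' (s, a'))
    with hV'def
  have hfixV : ∀ sa : S × A, Qstar sa = R sa.1 sa.2 + γ * ∑ s', p sa.1 sa.2 s' * V s' := hfix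
  have hfixV' : ∀ sa : S × A, Qstar' sa = R' sa.1 sa.2 + γ * ∑ s', p' sa.1 sa.2 s' * V' s' :=
    hfix'
  set D : ℝ := (Finset.univ : Finset (S × A)).sup' Finset.univ_nonempty
    (fun sa => |Qstar sa - Qstar' sa|) with hDdef
  have hDle : ∀ sa : S × A, |Qstar sa - Qstar' sa| ≤ D := fun sa =>
    Finset.le_sup' (fun sa => |Qstar sa - Qstar' sa|) (Finset.mem_univ sa)
  have hD0 : 0 ≤ D :=
    le_trans (abs_nonneg _) (hDle (Classical.arbitrary _))
  have hVmax0 : 0 ≤ Vmax := le_trans (abs_nonneg _) (hbdd (Classical.arbitrary _))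
  have hVbd : ∀ s, |V s| ≤ Vmax := by
    intro s
    rw [abs_le]
    constructor
    · refine le_trans ?_ (Finset.le_sup' (fun a' => Qstar (s, a'))
        (Finset.mem_univ (Classical.arbitrary A)))
      linarith [(abs_le.mp (hbdd (s, Classical.arbitrary A))).1]
    · exact Finset.sup'_le _ _ fun a _ => (abs_le.mp (hbdd (s, a))).2
  have hVVd : ∀ s, |V s - V' s| ≤ D := by
    intro s
    rw [abs_sub_le_iff]
    constructor
    · rw [sub_le_iff_le_add]
      refine Finset.sup'_le _ _ fun a _ => ?_
      have h1 : Qstar (s, a) - Qstar' (s, a) ≤ D :=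
        le_trans (le_abs_self _) (hDle (s, a))
      have h2 : Qstar' (s, a) ≤ V' s := Finset.le_sup' (fun a' => Qstar' (s, a'))
        (Finset.mem_univ a)
      linarith
    · rw [sub_le_iff_le_add]
      refine Finset.sup'_le _ _ fun a _ => ?_
      have h1 : Qstar' (s, a) - Qstar (s, a) ≤ D := by
        refine le_trans (le_abs_self _) ?_
        rw [abs_sub_comm]; exact hDle (s, a)
      have h2 : Qstar (s, a) ≤ V s := Finset.le_sup' (fun a' => Qstar (s, a'))
        (Finset.mem_univ a)
      linarith
  have key : ∀ sa : S × A, |Qstar sa - Qstar' sa| ≤ εR + γ * (Vmax * εp) + γ * D := by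
    rintro ⟨s, a⟩
    have e1 : Qstar (s, a) - Qstar' (s, a)
        = (R s a - R' s a) + γ * (∑ s', (p s a s' - p' s a s') * V s')
          + γ * (∑ s', p' s a s' * (V s' - V' s')) := by
      rw [hfixV (s, a), hfixV' (s, a)]
      simp only [sub_mul, mul_sub, Finset.sum_sub_distrib]
      ring
    have b1 : |∑ s', (p s a s' - p' s a s') * V s'| ≤ Vmax * εp := by
      refine le_trans (Finset.abs_sum_le_sum_abs _ _) ?_
      have : ∀ s' ∈ Finset.univ, |(p s a s' - p' s a s') * V s'|
          ≤ Vmax * |p s a s' - p' s a s'| := by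
        intro s' _
        rw [abs_mul, mul_comm]
        exact mul_le_mul_of_nonneg_right (hVbd s') (abs_nonneg _)
      refine le_trans (Finset.sum_le_sum this) ?_
      rw [← Finset.mul_sum]
      exact mul_le_mul_of_nonneg_left (hclose_p s a) hVmax0
    have b2 : |∑ s', p' s a s' * (V s' - V' s')| ≤ D := by
      refine le_trans (Finset.abs_sum_le_sum_abs _ _) ?_
      have : ∀ s' ∈ Finset.univ, |p' s a s' * (V s' - V' s')| ≤ p' s a s' * D := by
        intro s' _
        rw [abs_mul, abs_of_nonneg (hp0' s a s')]
        exact mul_le_mul_of_nonneg_left (hVVd s') (hp0' s a s')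
      refine le_trans (Finset.sum_le_sum this) ?_
      rw [← Finset.sum_mul, hp1' s a, one_mul]
    calc |Qstar (s, a) - Qstar' (s, a)|
        ≤ |R s a - R' s a| + |γ * (∑ s', (p s a s' - p' s a s') * V s')|
          + |γ * (∑ s', p' s a s' * (V s' - V' s'))| := by
          rw [e1]; exact abs_add_three _ _ _
      _ ≤ εR + γ * (Vmax * εp) + γ * D := by
          rw [abs_mul, abs_mul, abs_of_nonneg hγ0]
          have := hclose_R s a
          have h1 := mul_le_mul_of_nonneg_left b1 hγ0
          have h2 := mul_le_mul_of_nonneg_left b2 hγ0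
          linarith
  have hDkey : D ≤ εR + γ * (Vmax * εp) + γ * D :=
    Finset.sup'_le _ _ fun sa _ => key sa
  intro sa
  refine le_trans (hDle sa) ?_
  rw [le_div_iff₀ (by linarith)]
  nlinarith
end

section
/- With notation as in the previous statement, if the true model satisfies |R(s,a) − R̂(s,a)| ≤ ε_R and ‖P(s,a) − P̂(s,a)‖₁ ≤ ε_p for all (s,a), then the fixed point Q_u of the optimistic operator satisfies Q_u(s,a) ≥ Q*(s,a) for all (s,a), where Q* is the optimal Q-value of the true model. -/
/-- Validity of the optimistic bound: if the true model lies in the confidence sets, then the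
fixed point of the optimistic Bellman operator upper-bounds the true optimal Q-values. -/
theorem stmt_10 {S A : Type*} [Fintype S] [Fintype A] [Nonempty S] [Nonempty A]
    (γ : ℝ) (hγ : γ ∈ Set.Ico (0 : ℝ) 1)
    (Rhat : S → A → ℝ) (Phat : S → A → S → ℝ)
    (hP0 : ∀ s a s', 0 ≤ Phat s a s') (hP1 : ∀ s a, ∑ s', Phat s a s' = 1)
    (εR εp : ℝ) (hεR : 0 ≤ εR) (hεp : 0 ≤ εp)
    (R : S → A → ℝ) (P : S → A → S → ℝ)
    (hP0' : ∀ s a s', 0 ≤ P s a s') (hP1' : ∀ s a, ∑ s', P s a s' = 1)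
    (hRin : ∀ s a, |R s a - Rhat s a| ≤ εR)
    (hPin : ∀ s a, ∑ s', |P s a s' - Phat s a s'| ≤ εp)
    (Tu : (S × A → ℝ) → (S × A → ℝ))
    (hTu : ∀ Q sa, Tu Q sa = (Rhat sa.1 sa.2 + εR) +
      sSup {x : ℝ | ∃ Pt : S → ℝ, (∀ s', 0 ≤ Pt s') ∧ (∑ s', Pt s') = 1 ∧
        (∑ s', |Pt s' - Phat sa.1 sa.2 s'|) ≤ εp ∧
        x = γ * ∑ s', Pt s' *
          (Finset.univ.sup' Finset.univ_nonempty (fun a' => Q (s', a')))})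
    (Qu : S × A → ℝ) (hQu : Tu Qu = Qu)
    (Qstar : S × A → ℝ)
    (hQstar : ∀ sa : S × A, Qstar sa = R sa.1 sa.2 + γ * ∑ s', P sa.1 sa.2 s' *
      (Finset.univ.sup' Finset.univ_nonempty (fun a' => Qstar (s', a')))) :
    ∀ sa : S × A, Qstar sa ≤ Qu sa := by

  obtain ⟨hγ0, hγ1⟩ := hγ
  set V : (S × A → ℝ) → S → ℝ :=
    fun Q s => Finset.univ.sup' Finset.univ_nonempty (fun a' => Q (s, a')) with hV
  -- Qu sa ≥ Rhat + εR + γ ∑ P * V Qu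
  have hQuge : ∀ sa : S × A,
      Rhat sa.1 sa.2 + εR + γ * ∑ s', P sa.1 sa.2 s' * V Qu s' ≤ Qu sa := by
    intro sa
    have hbdd : BddAbove {x : ℝ | ∃ Pt : S → ℝ, (∀ s', 0 ≤ Pt s') ∧ (∑ s', Pt s') = 1 ∧
        (∑ s', |Pt s' - Phat sa.1 sa.2 s'|) ≤ εp ∧
        x = γ * ∑ s', Pt s' *
          (Finset.univ.sup' Finset.univ_nonempty (fun a' => Qu (s', a')))} := by
      refine ⟨γ * Finset.univ.sup' Finset.univ_nonempty (V Qu), ?_⟩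
      rintro x ⟨Pt, h0, h1, -, rfl⟩
      have : ∑ s', Pt s' * (Finset.univ.sup' Finset.univ_nonempty (fun a' => Qu (s', a')))
          ≤ ∑ s', Pt s' * Finset.univ.sup' Finset.univ_nonempty (V Qu) := by
        apply Finset.sum_le_sum
        intro s' _
        exact mul_le_mul_of_nonneg_left
          (Finset.le_sup' (V Qu) (Finset.mem_univ s')) (h0 s')
      calc γ * ∑ s', Pt s' * (Finset.univ.sup' Finset.univ_nonempty (fun a' => Qu (s', a')))
          ≤ γ * ∑ s', Pt s' * Finset.univ.sup' Finset.univ_nonempty (V Qu) :=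
            mul_le_mul_of_nonneg_left this hγ0
        _ = γ * Finset.univ.sup' Finset.univ_nonempty (V Qu) := by
            rw [← Finset.sum_mul, h1, one_mul]
    have hmem : γ * ∑ s', P sa.1 sa.2 s' * V Qu s' ∈
        {x : ℝ | ∃ Pt : S → ℝ, (∀ s', 0 ≤ Pt s') ∧ (∑ s', Pt s') = 1 ∧
        (∑ s', |Pt s' - Phat sa.1 sa.2 s'|) ≤ εp ∧
        x = γ * ∑ s', Pt s' *
          (Finset.univ.sup' Finset.univ_nonempty (fun a' => Qu (s', a')))} :=
      ⟨P sa.1 sa.2, hP0' sa.1 sa.2, hP1' sa.1 sa.2, hPin sa.1 sa.2, rfl⟩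
    have := le_csSup hbdd hmem
    calc Rhat sa.1 sa.2 + εR + γ * ∑ s', P sa.1 sa.2 s' * V Qu s'
        ≤ Rhat sa.1 sa.2 + εR + sSup {x : ℝ | ∃ Pt : S → ℝ, (∀ s', 0 ≤ Pt s') ∧
          (∑ s', Pt s') = 1 ∧ (∑ s', |Pt s' - Phat sa.1 sa.2 s'|) ≤ εp ∧
          x = γ * ∑ s', Pt s' *
            (Finset.univ.sup' Finset.univ_nonempty (fun a' => Qu (s', a')))} := by
          linarith
      _ = Tu Qu sa := (hTu Qu sa).symm
      _ = Qu sa := by rw [hQu]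
  set D : ℝ := Finset.univ.sup' Finset.univ_nonempty (fun sa : S × A => Qstar sa - Qu sa)
    with hD
  have hstep : ∀ sa : S × A, Qstar sa - Qu sa ≤ γ * D := by
    intro sa
    have hVle : ∀ s', V Qstar s' ≤ V Qu s' + D := by
      intro s'
      apply Finset.sup'_le
      intro a' _
      have h1 : Qstar (s', a') - Qu (s', a') ≤ D :=
        Finset.le_sup' (fun sa : S × A => Qstar sa - Qu sa) (Finset.mem_univ (s', a'))
      have h2 : Qu (s', a') ≤ V Qu s' :=
        Finset.le_sup' (fun a' => Qu (s', a')) (Finset.mem_univ a')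
      linarith
    have hsum : ∑ s', P sa.1 sa.2 s' * V Qstar s'
        ≤ ∑ s', P sa.1 sa.2 s' * (V Qu s' + D) := by
      apply Finset.sum_le_sum
      intro s' _
      exact mul_le_mul_of_nonneg_left (hVle s') (hP0' sa.1 sa.2 s')
    have hsum2 : ∑ s', P sa.1 sa.2 s' * (V Qu s' + D)
        = (∑ s', P sa.1 sa.2 s' * V Qu s') + D := by
      simp only [mul_add, Finset.sum_add_distrib, ← Finset.sum_mul, hP1' sa.1 sa.2, one_mul]
    have := hQuge sa
    have hq := hQstar sa
    nlinarith [abs_le.mp (hRin sa.1 sa.2), mul_le_mul_of_nonneg_left (hsum.trans_eq hsum2) hγ0]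
  have hDle : D ≤ γ * D := by
    rw [hD]
    exact Finset.sup'_le _ _ fun sa _ => hstep sa
  have hD0 : D ≤ 0 := by nlinarith
  intro sa
  have : Qstar sa - Qu sa ≤ D :=
    Finset.le_sup' (fun sa : S × A => Qstar sa - Qu sa) (Finset.mem_univ sa)
  linarith
end

section
/- With notation as above, define the pessimistic operator (T_l Q)(s,a) = (R̂(s,a) − ε_R) + min over probability vectors P̃ with ‖P̃ − P̂(s,a)‖₁ ≤ ε_p of γ·∑_{s'} p̃(s')·max_{a'} Q(s',a'). If the true model parameters lie in the confidence sets, then the fixed point Q_l of T_l satisfies Q_l(s,a) ≤ Q*(s,a) for all (s,a). -/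
/-- Validity of the pessimistic bound: if the true model lies in the confidence sets, then the
fixed point of the pessimistic Bellman operator lower-bounds the true optimal Q-values. -/
theorem stmt_11 {S A : Type*} [Fintype S] [Fintype A] [Nonempty S] [Nonempty A]
    (γ : ℝ) (hγ : γ ∈ Set.Ico (0 : ℝ) 1)
    (Rhat : S → A → ℝ) (Phat : S → A → S → ℝ)
    (hP0 : ∀ s a s', 0 ≤ Phat s a s') (hP1 : ∀ s a, ∑ s', Phat s a s' = 1)
    (εR εp : ℝ) (hεR : 0 ≤ εR) (hεp : 0 ≤ εp)
    (R : S → A → ℝ) (P : S → A → S → ℝ)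
    (hP0' : ∀ s a s', 0 ≤ P s a s') (hP1' : ∀ s a, ∑ s', P s a s' = 1)
    (hRin : ∀ s a, |R s a - Rhat s a| ≤ εR)
    (hPin : ∀ s a, ∑ s', |P s a s' - Phat s a s'| ≤ εp)
    (Tl : (S × A → ℝ) → (S × A → ℝ))
    (hTl : ∀ Q sa, Tl Q sa = (Rhat sa.1 sa.2 - εR) +
      sInf {x : ℝ | ∃ Pt : S → ℝ, (∀ s', 0 ≤ Pt s') ∧ (∑ s', Pt s') = 1 ∧
        (∑ s', |Pt s' - Phat sa.1 sa.2 s'|) ≤ εp ∧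
        x = γ * ∑ s', Pt s' *
          (Finset.univ.sup' Finset.univ_nonempty (fun a' => Q (s', a')))})
    (Ql : S × A → ℝ) (hQl : Tl Ql = Ql)
    (Qstar : S × A → ℝ)
    (hQstar : ∀ sa : S × A, Qstar sa = R sa.1 sa.2 + γ * ∑ s', P sa.1 sa.2 s' *
      (Finset.univ.sup' Finset.univ_nonempty (fun a' => Qstar (s', a')))) :
    ∀ sa : S × A, Ql sa ≤ Qstar sa := by
  obtain ⟨hγ0, hγ1⟩ := hγ
  have hne : (Finset.univ : Finset (S × A)).Nonempty := Finset.univ_nonempty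
  set V : S → ℝ := fun s' => Finset.univ.sup' Finset.univ_nonempty (fun a' => Ql (s', a'))
    with hVdef
  set W : S → ℝ := fun s' => Finset.univ.sup' Finset.univ_nonempty (fun a' => Qstar (s', a'))
    with hWdef
  set M : ℝ := Finset.univ.sup' hne (fun sa => Ql sa - Qstar sa) with hMdef
  have key : ∀ sa : S × A, Ql sa - Qstar sa ≤ γ * M := by
    intro sa
    have hmem : γ * ∑ s', P sa.1 sa.2 s' * V s' ∈
        {x : ℝ | ∃ Pt : S → ℝ, (∀ s', 0 ≤ Pt s') ∧ (∑ s', Pt s') = 1 ∧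
          (∑ s', |Pt s' - Phat sa.1 sa.2 s'|) ≤ εp ∧
          x = γ * ∑ s', Pt s' *
            (Finset.univ.sup' Finset.univ_nonempty (fun a' => Ql (s', a')))} :=
      ⟨P sa.1 sa.2, hP0' _ _, hP1' _ _, hPin _ _, rfl⟩
    have hbdd : BddBelow {x : ℝ | ∃ Pt : S → ℝ, (∀ s', 0 ≤ Pt s') ∧ (∑ s', Pt s') = 1 ∧
          (∑ s', |Pt s' - Phat sa.1 sa.2 s'|) ≤ εp ∧
          x = γ * ∑ s', Pt s' *
            (Finset.univ.sup' Finset.univ_nonempty (fun a' => Ql (s', a')))} := by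
      refine ⟨γ * Finset.univ.inf' Finset.univ_nonempty V, ?_⟩
      rintro x ⟨Pt, hPt0, hPt1, -, rfl⟩
      have h1 : Finset.univ.inf' Finset.univ_nonempty V ≤ ∑ s', Pt s' * V s' := by
        calc Finset.univ.inf' Finset.univ_nonempty V
            = ∑ s', Pt s' * Finset.univ.inf' Finset.univ_nonempty V := by
              rw [← Finset.sum_mul, hPt1, one_mul]
          _ ≤ ∑ s', Pt s' * V s' := by
              apply Finset.sum_le_sum
              intro s' _
              exact mul_le_mul_of_nonneg_left (Finset.inf'_le _ (Finset.mem_univ s')) (hPt0 s')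
      exact mul_le_mul_of_nonneg_left h1 hγ0
    have h1 : Ql sa ≤ R sa.1 sa.2 + γ * ∑ s', P sa.1 sa.2 s' * V s' := by
      have hR' : Rhat sa.1 sa.2 - εR ≤ R sa.1 sa.2 := by
        have := abs_le.mp (hRin sa.1 sa.2); linarith [this.1]
      calc Ql sa = Tl Ql sa := by rw [hQl]
        _ = (Rhat sa.1 sa.2 - εR) + sInf _ := hTl Ql sa
        _ ≤ R sa.1 sa.2 + γ * ∑ s', P sa.1 sa.2 s' * V s' :=
            add_le_add hR' (csInf_le hbdd hmem)
    have h2 : ∀ s', V s' - W s' ≤ M := by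
      intro s'
      have : V s' ≤ W s' + M := by
        apply Finset.sup'_le
        intro a' _
        have hle : Ql (s', a') - Qstar (s', a') ≤ M :=
          Finset.le_sup' (fun sa => Ql sa - Qstar sa) (Finset.mem_univ (s', a'))
        have hle2 : Qstar (s', a') ≤ W s' :=
          Finset.le_sup' (fun a' => Qstar (s', a')) (Finset.mem_univ a')
        linarith
      linarith
    have h3 : ∑ s', P sa.1 sa.2 s' * V s' - ∑ s', P sa.1 sa.2 s' * W s' ≤ M := by
      calc ∑ s', P sa.1 sa.2 s' * V s' - ∑ s', P sa.1 sa.2 s' * W s'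
          = ∑ s', P sa.1 sa.2 s' * (V s' - W s') := by
            rw [← Finset.sum_sub_distrib]; congr 1; ext s'; ring
        _ ≤ ∑ s', P sa.1 sa.2 s' * M := by
            apply Finset.sum_le_sum
            intro s' _
            exact mul_le_mul_of_nonneg_left (h2 s') (hP0' _ _ _)
        _ = M := by rw [← Finset.sum_mul, hP1' sa.1 sa.2, one_mul]
    have h4 := hQstar sa
    have : Ql sa - Qstar sa ≤ γ * (∑ s', P sa.1 sa.2 s' * V s' - ∑ s', P sa.1 sa.2 s' * W s') := by
      rw [h4, hWdef]; ring_nf; ring_nf at h1 ⊢; nlinarith [h1]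
    calc Ql sa - Qstar sa
        ≤ γ * (∑ s', P sa.1 sa.2 s' * V s' - ∑ s', P sa.1 sa.2 s' * W s') := this
      _ ≤ γ * M := mul_le_mul_of_nonneg_left h3 hγ0
  have hM : M ≤ γ * M := by
    apply Finset.sup'_le
    intro sa _
    exact key sa
  have hM0 : M ≤ 0 := by nlinarith
  intro sa
  have := Finset.le_sup' (fun sa => Ql sa - Qstar sa) (Finset.mem_univ sa)
  simp only [← hMdef] at this
  linarith
end

section
/- The maximum in the optimistic operator max over {P̃ : P̃ probability vector, ‖P̃ − P̂‖₁ ≤ ε_p} of ∑_i p̃_i·U_i is attained by the vector constructed as follows: increase the coordinate with largest U_i by min(ε_p/2, 1 − p̂_i), then decrease coordinates in increasing order of U_i (setting them to 0) until the total sums to 1; this procedure yields a valid probability vector within L1 distance ε_p of P̂ achieving the maximum. -/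
/-!
The algorithm squeezes `q₀ = P̂ + δ eⱼ`, where `δ = min (1 - P̂ⱼ) (ε/2)`. Running along increasing
`U`, squeezing zeroes every coordinate before some pivot `p`, adjusts `p` so that the total is `1`
and keeps the coordinates after `p`. Hence `q` is a probability vector exceeding `P̂` only at `j`,
by at most `δ`, so `‖q - P̂‖₁ ≤ 2δ ≤ ε`.

Optimality is weak duality with the threshold `t = U p` as dual variable: for a probability
vector `x`, `⟨x - q, U⟩ ≤ ⟨x - q₀, (U - t)⁺⟩ ≤ (∑_{i ≠ j} (xᵢ - P̂ᵢ)⁺ + (xⱼ - P̂ⱼ) - δ) (Uⱼ - t)⁺`,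
because `(U - t)⁺` peaks at `j`; and this is `≤ 0` because a feasible `x` can move at most
`min (ε/2) (1 - P̂ⱼ) = δ` of mass.
-/

/-- The reduction loop of Algorithm 1 (lines 18–24): processing indices in the given order,
each processed coordinate is set to `max 0 (1 - (sum of the other coordinates))`. -/
def squeeze {m : ℕ} (q : Fin m → ℝ) : List (Fin m) → (Fin m → ℝ)
  | [] => q
  | i :: rest =>
      squeeze (Function.update q i (max 0 (1 - ∑ k ∈ Finset.univ.erase i, q k))) rest

open Finset

section PositivePart

variable {ι α : Type*} [AddCommGroup α] [LinearOrder α] [IsOrderedAddMonoid α]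

lemma sum_abs_eq_two_nsmul_sum_posPart {s : Finset ι} {d : ι → α} (hd : ∑ i ∈ s, d i = 0) :
    ∑ i ∈ s, |d i| = 2 • ∑ i ∈ s, (d i)⁺ := by
  rw [smul_sum, ← sum_congr rfl fun i _ => abs_add_eq_two_nsmul_posPart (d i), sum_add_distrib,
    hd, add_zero]

end PositivePart

section RealVectors

variable {ι : Type*} [Fintype ι]

lemma sum_abs_sub_eq_two_mul_sum_posPart {x P : ι → ℝ} (hsum : ∑ i, x i = ∑ i, P i) :
    ∑ i, |x i - P i| = 2 * ∑ i, (x i - P i)⁺ := by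
  rw [sum_abs_eq_two_nsmul_sum_posPart (by rw [sum_sub_distrib, hsum, sub_self]), two_nsmul,
    two_mul]

lemma sum_mul_sub_sum_mul_le_of_threshold {x r q U : ι → ℝ} {t : ℝ} (hx0 : ∀ i, 0 ≤ x i)
    (hsum : ∑ i, x i = ∑ i, r i) (hlow : ∀ i, U i < t → r i = 0)
    (hhigh : ∀ i, t < U i → r i = q i) :
    ∑ i, x i * U i - ∑ i, r i * U i ≤ ∑ i, (x i - q i) * (U i - t)⁺ := by
  have hshift : ∑ i, x i * U i - ∑ i, r i * U i = ∑ i, (x i - r i) * (U i - t) := by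
    simp only [sub_mul, mul_sub, sum_sub_distrib, ← sum_mul, hsum]
    ring
  rw [hshift]
  refine sum_le_sum fun i _ => ?_
  rcases lt_trichotomy (U i) t with hlt | heq | hgt
  · rw [hlow i hlt, posPart_eq_zero.2 (by linarith), mul_zero, sub_zero]
    exact mul_nonpos_of_nonneg_of_nonpos (hx0 i) (by linarith)
  · simp [heq]
  · rw [hhigh i hgt, posPart_eq_self.2 (by linarith)]

lemma sum_abs_sub_le_two_mul {r P : ι → ℝ} {j : ι} {δ : ℝ} (hsum : ∑ i, r i = ∑ i, P i)
    (hδ : 0 ≤ δ) (hj : r j ≤ P j + δ) (hle : ∀ i ≠ j, r i ≤ P i) :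
    ∑ i, |r i - P i| ≤ 2 * δ := by
  rw [sum_abs_sub_eq_two_mul_sum_posPart hsum,
    sum_eq_single j (fun i _ hi => posPart_eq_zero.2 (sub_nonpos.2 (hle i hi))) (by simp)]
  gcongr
  exact sup_le (by linarith) hδ

variable [DecidableEq ι]

lemma sum_erase_posPart_sub_add_sub_le {x P : ι → ℝ} {ε : ℝ} (j : ι) (hx0 : ∀ i, 0 ≤ x i)
    (hP0 : ∀ i, 0 ≤ P i) (hx1 : ∑ i, x i = 1) (hP1 : ∑ i, P i = 1)
    (hε : ∑ i, |x i - P i| ≤ ε) :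
    ∑ i ∈ univ.erase j, (x i - P i)⁺ + (x j - P j) ≤ min 1 (P j + ε / 2) - P j := by
  have hsplit := add_sum_erase univ (fun i => (x i - P i)⁺) (mem_univ j)
  have hxsplit := add_sum_erase univ x (mem_univ j)
  have hhalf := sum_abs_sub_eq_two_mul_sum_posPart (hx1.trans hP1.symm)
  have hpos_le : ∑ i ∈ univ.erase j, (x i - P i)⁺ ≤ ∑ i ∈ univ.erase j, x i :=
    sum_le_sum fun i _ => sup_le (by linarith [hP0 i]) (hx0 i)
  have hj := le_posPart (x j - P j)
  rw [le_sub_iff_add_le]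
  exact le_min (by linarith) (by linarith)

lemma sum_sub_update_mul_nonpos {x P g : ι → ℝ} {j : ι} {δ : ℝ} (hg0 : ∀ i, 0 ≤ g i)
    (hgj : ∀ i, g i ≤ g j) (hx : ∑ i ∈ univ.erase j, (x i - P i)⁺ + (x j - P j) ≤ δ) :
    ∑ i, (x i - Function.update P j (P j + δ) i) * g i ≤ 0 := by
  have hterm : ∀ i ∈ univ.erase j,
      (x i - Function.update P j (P j + δ) i) * g i ≤ (x i - P i)⁺ * g j := by
    intro i hi
    rw [Function.update_of_ne (ne_of_mem_erase hi)]
    exact (mul_le_mul_of_nonneg_right (le_posPart _) (hg0 i)).trans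
      (mul_le_mul_of_nonneg_left (hgj i) (posPart_nonneg _))
  calc ∑ i, (x i - Function.update P j (P j + δ) i) * g i
      = (x j - (P j + δ)) * g j
          + ∑ i ∈ univ.erase j, (x i - Function.update P j (P j + δ) i) * g i := by
        rw [← add_sum_erase _ _ (mem_univ j), Function.update_self]
    _ ≤ (x j - (P j + δ)) * g j + (∑ i ∈ univ.erase j, (x i - P i)⁺) * g j := by
        rw [sum_mul]; exact add_le_add_right (sum_le_sum hterm) _
    _ = (∑ i ∈ univ.erase j, (x i - P i)⁺ + (x j - P j) - δ) * g j := by ring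
    _ ≤ 0 := mul_nonpos_of_nonpos_of_nonneg (by linarith) (hg0 j)

end RealVectors

section Squeeze

variable {m : ℕ}

lemma squeeze_of_sum_eq_one {q : Fin m → ℝ} (hq0 : ∀ i, 0 ≤ q i) (hq1 : ∑ i, q i = 1)
    (l : List (Fin m)) : squeeze q l = q := by
  induction l with
  | nil => rfl
  | cons i rest ih =>
    rw [squeeze, sum_erase_eq_sub (mem_univ i), hq1, sub_sub_cancel, max_eq_right (hq0 i),
      Function.update_eq_self, ih]

lemma squeeze_cons_of_one_le {q : Fin m → ℝ} {i : Fin m} {l : List (Fin m)}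
    (h : 1 ≤ ∑ k ∈ univ.erase i, q k) :
    squeeze q (i :: l) = squeeze (Function.update q i 0) l := by
  rw [squeeze, max_eq_left (by linarith)]

lemma squeeze_cons_of_lt_one {q : Fin m → ℝ} {i : Fin m} {l : List (Fin m)}
    (hq0 : ∀ k, 0 ≤ q k) (h : ∑ k ∈ univ.erase i, q k < 1) :
    squeeze q (i :: l) = Function.update q i (1 - ∑ k ∈ univ.erase i, q k) := by
  rw [squeeze, max_eq_right (by linarith)]
  refine squeeze_of_sum_eq_one (fun k => ?_) ?_ l
  · rcases eq_or_ne k i with rfl | hk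
    · rw [Function.update_self]; linarith
    · rw [Function.update_of_ne hk]; exact hq0 k
  · rw [sum_update_of_mem (mem_univ i), sdiff_singleton_eq_erase]; ring

lemma squeeze_spec {q : Fin m → ℝ} {l : List (Fin m)} (hq0 : ∀ k, 0 ≤ q k)
    (hq1 : 1 ≤ ∑ k, q k) (hsupp : ∀ k ∉ l, q k = 0) (hl : l.Nodup) :
    ∃ l₁ p l₂, l = l₁ ++ p :: l₂ ∧ (∀ a ∈ l₁, squeeze q l a = 0) ∧
      (∀ k ∉ l₁, k ≠ p → squeeze q l k = q k) ∧ squeeze q l p ∈ Set.Icc 0 (q p) ∧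
      ∑ k, squeeze q l k = 1 := by
  induction l generalizing q with
  | nil =>
    have : ∑ k, q k = 0 := sum_eq_zero fun k _ => hsupp k List.not_mem_nil
    linarith
  | cons i rest ih =>
    obtain ⟨hi, hrest⟩ := List.nodup_cons.1 hl
    have hsplit := add_sum_erase univ q (mem_univ i)
    rcases lt_or_ge (∑ k ∈ univ.erase i, q k) 1 with hlt | hge
    · rw [squeeze_cons_of_lt_one hq0 hlt]
      refine ⟨[], i, rest, rfl, by simp, fun k _ hk => Function.update_of_ne hk _ _, ?_, ?_⟩
      · rw [Function.update_self]; constructor <;> linarith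
      · rw [sum_update_of_mem (mem_univ i), sdiff_singleton_eq_erase]; ring
    · rw [squeeze_cons_of_one_le hge]
      have hq0' : ∀ k, 0 ≤ Function.update q i 0 k := fun k => by
        rcases eq_or_ne k i with rfl | hk
        · rw [Function.update_self]
        · rw [Function.update_of_ne hk]; exact hq0 k
      have hq1' : 1 ≤ ∑ k, Function.update q i 0 k := by
        rwa [sum_update_of_mem (mem_univ i), sdiff_singleton_eq_erase, zero_add]
      have hsupp' : ∀ k ∉ rest, Function.update q i 0 k = 0 := fun k hk => by
        rcases eq_or_ne k i with rfl | hki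
        · rw [Function.update_self]
        · rw [Function.update_of_ne hki]; exact hsupp k (by simp [hki, hk])
      obtain ⟨l₁, p, l₂, rfl, hzero, hkeep, hp, hsum⟩ := ih hq0' hq1' hsupp' hrest
      have hpi : p ≠ i := by rintro rfl; simp at hi
      refine ⟨i :: l₁, p, l₂, rfl, ?_, fun k hk hkp => ?_, ?_, hsum⟩
      · intro a ha
        rcases List.mem_cons.1 ha with rfl | ha
        · rw [hkeep a (fun h => hi (by simp [h])) (Ne.symm hpi), Function.update_self]
        · exact hzero a ha
      · rw [hkeep k (fun h => hk (List.mem_cons_of_mem _ h)) hkp,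
          Function.update_of_ne (by rintro rfl; exact hk List.mem_cons_self)]
      · rwa [← Function.update_of_ne hpi 0 q]

lemma squeeze_mem_Icc {q : Fin m → ℝ} {l : List (Fin m)} (hq0 : ∀ k, 0 ≤ q k)
    (hq1 : 1 ≤ ∑ k, q k) (hsupp : ∀ k ∉ l, q k = 0) (hl : l.Nodup) (i : Fin m) :
    squeeze q l i ∈ Set.Icc 0 (q i) := by
  obtain ⟨l₁, p, l₂, -, hzero, hkeep, hp, -⟩ := squeeze_spec hq0 hq1 hsupp hl
  by_cases hi : i ∈ l₁
  · rw [hzero i hi]; exact ⟨le_rfl, hq0 i⟩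
  by_cases hip : i = p
  · exact hip ▸ hp
  · rw [hkeep i hi hip]; exact ⟨hq0 i, le_rfl⟩

lemma sum_squeeze_eq_one {q : Fin m → ℝ} {l : List (Fin m)} (hq0 : ∀ k, 0 ≤ q k)
    (hq1 : 1 ≤ ∑ k, q k) (hsupp : ∀ k ∉ l, q k = 0) (hl : l.Nodup) :
    ∑ k, squeeze q l k = 1 := by
  obtain ⟨_, _, _, -, -, -, -, hsum⟩ := squeeze_spec hq0 hq1 hsupp hl
  exact hsum

lemma threshold_of_sorted_split {ι : Type*} {U r q : ι → ℝ} {l₁ l₂ : List ι} {p : ι}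
    (hsorted : (l₁ ++ p :: l₂).Pairwise (fun i k => U i ≤ U k)) (hmem : ∀ i, i ∈ l₁ ++ p :: l₂)
    (hzero : ∀ a ∈ l₁, r a = 0) (hkeep : ∀ k ∉ l₁, k ≠ p → r k = q k) :
    (∀ i, U i < U p → r i = 0) ∧ (∀ i, U p < U i → r i = q i) := by
  obtain ⟨-, hright, hcross⟩ := List.pairwise_append.1 hsorted
  have hle_p : ∀ a ∈ l₁, U a ≤ U p := fun a ha => hcross a ha p List.mem_cons_self
  have hp_le : ∀ b ∈ l₂, U p ≤ U b := (List.pairwise_cons.1 hright).1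
  refine ⟨fun i hi => hzero i ?_, fun i hi => hkeep i (fun h => ?_) ?_⟩
  · rcases List.mem_append.1 (hmem i) with h | h
    · exact h
    · rcases List.mem_cons.1 h with rfl | h
      · exact absurd hi (lt_irrefl _)
      · exact absurd (hp_le i h) (not_le.2 hi)
  · exact absurd (hle_p i h) (not_le.2 hi)
  · rintro rfl; exact lt_irrefl _ hi

lemma exists_threshold_squeeze {U q : Fin m → ℝ} {l : List (Fin m)} (hq0 : ∀ k, 0 ≤ q k)
    (hq1 : 1 ≤ ∑ k, q k) (hl : l.Nodup) (hmem : ∀ i, i ∈ l)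
    (hsorted : l.Pairwise (fun i k => U i ≤ U k)) :
    ∃ t, (∀ i, U i < t → squeeze q l i = 0) ∧ (∀ i, t < U i → squeeze q l i = q i) := by
  obtain ⟨l₁, p, l₂, hsplit, hzero, hkeep, -, -⟩ :=
    squeeze_spec hq0 hq1 (fun k hk => absurd (hmem k) hk) hl
  rw [hsplit] at hsorted hmem
  exact ⟨U p, threshold_of_sorted_split hsorted hmem hzero hkeep⟩

end Squeeze

theorem stmt_13_general {m : ℕ} (Phat U : Fin m → ℝ)
    (hP0 : ∀ i, 0 ≤ Phat i) (hP1 : ∑ i, Phat i = 1)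
    (εp : ℝ) (hεp : εp ∈ Set.Icc (0 : ℝ) 2)
    (j : Fin m) (hj : ∀ i, U i ≤ U j)
    (l : List (Fin m)) (hnodup : l.Nodup) (hmem : ∀ i, i ∈ l)
    (hsorted : l.Pairwise (fun i k => U i ≤ U k))
    (q : Fin m → ℝ)
    (hq : q = squeeze (Function.update Phat j (min 1 (Phat j + εp / 2))) l) :
    (∀ i, 0 ≤ q i) ∧ (∑ i, q i) = 1 ∧ (∑ i, |q i - Phat i|) ≤ εp ∧
    ∀ Pt : Fin m → ℝ, (∀ i, 0 ≤ Pt i) → (∑ i, Pt i) = 1 →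
      (∑ i, |Pt i - Phat i|) ≤ εp → ∑ i, Pt i * U i ≤ ∑ i, q i * U i := by
  obtain ⟨hε0, -⟩ := hεp
  set δ := min 1 (Phat j + εp / 2) - Phat j
  have hPj : Phat j ≤ 1 := hP1 ▸ single_le_sum (fun i _ => hP0 i) (mem_univ j)
  have hδ0 : 0 ≤ δ := sub_nonneg.2 (le_min hPj (by linarith))
  have hδε : 2 * δ ≤ εp := by linarith [min_le_right 1 (Phat j + εp / 2)]
  rw [show min 1 (Phat j + εp / 2) = Phat j + δ by ring] at hq
  set q₀ := Function.update Phat j (Phat j + δ)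
  have hq₀0 : 0 ≤ q₀ := le_update_iff.2 ⟨(hP0 j).trans (by linarith), fun k _ => hP0 k⟩
  have hq₀1 : 1 ≤ ∑ i, q₀ i := by
    rw [sum_update_of_mem (mem_univ j), sdiff_singleton_eq_erase, sum_erase_eq_sub (mem_univ j),
      hP1]
    linarith
  have hsupp : ∀ k ∉ l, q₀ k = 0 := fun k hk => absurd (hmem k) hk
  have hbound := squeeze_mem_Icc hq₀0 hq₀1 hsupp hnodup
  have hsum := sum_squeeze_eq_one hq₀0 hq₀1 hsupp hnodup
  obtain ⟨t, hlow, hhigh⟩ := exists_threshold_squeeze (U := U) hq₀0 hq₀1 hnodup hmem hsorted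
  rw [← hq] at hbound hsum hlow hhigh
  refine ⟨fun i => (hbound i).1, hsum, ?_, fun x hx0 hx1 hxε => ?_⟩
  · calc ∑ i, |q i - Phat i| ≤ 2 * δ :=
          sum_abs_sub_le_two_mul (hsum.trans hP1.symm) hδ0 (by simpa [q₀] using (hbound j).2)
            fun i hi => by simpa [q₀, hi] using (hbound i).2
      _ ≤ εp := hδε
  · have hgap := sum_mul_sub_sum_mul_le_of_threshold hx0 (hx1.trans hsum.symm) hlow hhigh
    have hdual := sum_sub_update_mul_nonpos (g := fun i => (U i - t)⁺)
      (fun i => posPart_nonneg _) (fun i => posPart_mono (by linarith [hj i]))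
      (sum_erase_posPart_sub_add_sub_le j hx0 hP0 hx1 hP1 hxε)
    linarith

/-- Correctness of the inner linear-program solver of Algorithm 1: increasing the coordinate
with the largest value `U j` by `min (ε_p/2) (1 - P̂ j)` and then decreasing the coordinates in
increasing order of `U` (setting them to `0`) until the total sums to `1` yields a valid
probability vector within L1 distance `ε_p` of `P̂` maximizing `⟨·, U⟩` over the confidence set. -/
theorem stmt_13 {m : ℕ} (hm : 0 < m) (Phat U : Fin m → ℝ)
    (hP0 : ∀ i, 0 ≤ Phat i) (hP1 : ∑ i, Phat i = 1)
    (εp : ℝ) (hεp : εp ∈ Set.Icc (0 : ℝ) 2)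
    (j : Fin m) (hj : ∀ i, U i ≤ U j)
    (l : List (Fin m)) (hnodup : l.Nodup) (hmem : ∀ i, i ∈ l)
    (hsorted : l.Pairwise (fun i k => U i ≤ U k))
    (q : Fin m → ℝ)
    (hq : q = squeeze (Function.update Phat j (min 1 (Phat j + εp / 2))) l) :
    (∀ i, 0 ≤ q i) ∧ (∑ i, q i) = 1 ∧ (∑ i, |q i - Phat i|) ≤ εp ∧
    ∀ Pt : Fin m → ℝ, (∀ i, 0 ≤ Pt i) → (∑ i, Pt i) = 1 →
      (∑ i, |Pt i - Phat i|) ≤ εp → ∑ i, Pt i * U i ≤ ∑ i, q i * U i :=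
  stmt_13_general Phat U hP0 hP1 εp hεp j hj l hnodup hmem hsorted q hq
end

section
/- Let U ∈ ℝ^m and let C = {P̃ probability vector : ‖P̃ − P̂‖₁ ≤ ε_p}. Then max_{P̃ ∈ C} ⟨P̃, U⟩ ≤ ⟨P̂, U⟩ + (ε_p/2)·(max_i U_i − min_i U_i). -/
/-- Bound on the optimistic inner maximization: any probability vector within L1 distance
`ε_p` of `P̂` has inner product with `U` at most `⟨P̂, U⟩ + (ε_p/2)(max U - min U)`. -/
theorem stmt_14 {m : ℕ} (hm : 0 < m) (U Phat : Fin m → ℝ)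
    (εp : ℝ) (hεp : 0 ≤ εp)
    (hP0 : ∀ i, 0 ≤ Phat i) (hP1 : ∑ i, Phat i = 1)
    (Pt : Fin m → ℝ) (h0 : ∀ i, 0 ≤ Pt i) (h1 : ∑ i, Pt i = 1)
    (hL1 : ∑ i, |Pt i - Phat i| ≤ εp) :
    ∑ i, Pt i * U i ≤ ∑ i, Phat i * U i +
      (εp / 2) * (Finset.univ.sup' (Finset.univ_nonempty_iff.2 (Fin.pos_iff_nonempty.1 hm)) U
        - Finset.univ.inf' (Finset.univ_nonempty_iff.2 (Fin.pos_iff_nonempty.1 hm)) U) := by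
  have hne : (Finset.univ : Finset (Fin m)).Nonempty :=
    Finset.univ_nonempty_iff.2 (Fin.pos_iff_nonempty.1 hm)
  set M := Finset.univ.sup' hne U with hM
  set mi := Finset.univ.inf' hne U with hmi
  set c := (M + mi) / 2 with hc
  have hbound : ∀ i, |U i - c| ≤ (M - mi) / 2 := by
    intro i
    have h1 : U i ≤ M := Finset.le_sup' U (Finset.mem_univ i)
    have h2 : mi ≤ U i := Finset.inf'_le U (Finset.mem_univ i)
    rw [abs_le]; constructor <;> simp [hc] <;> linarith
  have hsum0 : ∑ i, (Pt i - Phat i) = 0 := by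
    rw [Finset.sum_sub_distrib, h1, hP1]; ring
  have key : ∑ i, Pt i * U i - ∑ i, Phat i * U i
      = ∑ i, (Pt i - Phat i) * (U i - c) := by
    have e : ∀ i, (Pt i - Phat i) * (U i - c)
        = Pt i * U i - Phat i * U i - (Pt i - Phat i) * c := by intro i; ring
    simp only [e]
    rw [Finset.sum_sub_distrib, Finset.sum_sub_distrib, ← Finset.sum_mul, hsum0]; ring
  have hstep : ∑ i, (Pt i - Phat i) * (U i - c)
      ≤ ∑ i, |Pt i - Phat i| * ((M - mi) / 2) := by
    apply Finset.sum_le_sum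
    intro i _
    calc (Pt i - Phat i) * (U i - c) ≤ |(Pt i - Phat i) * (U i - c)| := le_abs_self _
      _ = |Pt i - Phat i| * |U i - c| := abs_mul _ _
      _ ≤ |Pt i - Phat i| * ((M - mi) / 2) :=
          mul_le_mul_of_nonneg_left (hbound i) (abs_nonneg _)
  have hMm : 0 ≤ M - mi := by
    have := hne.exists_mem
    obtain ⟨i, _⟩ := this
    have h1 : U i ≤ M := Finset.le_sup' U (Finset.mem_univ i)
    have h2 : mi ≤ U i := Finset.inf'_le U (Finset.mem_univ i)
    linarith
  have hfin : ∑ i, |Pt i - Phat i| * ((M - mi) / 2) ≤ εp * ((M - mi) / 2) := by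
    rw [← Finset.sum_mul]
    exact mul_le_mul_of_nonneg_right hL1 (by linarith)
  linarith [key, hstep, hfin]
end

section
/- Let S be a finite set with projection π : S → S_x. Suppose empirical visit frequencies converge to strictly positive weights w(s) and the per-state empirical mean rewards R̂_t(s,a) converge to R(s,a). Then the subspace estimated reward R̂_t(s_x,a) = ∑_{s: π(s)=s_x} n_t(s,a)·R̂_t(s,a) / ∑_{s: π(s)=s_x} n_t(s,a) converges to ∑_{s: π(s)=s_x} w̃(s)·R(s,a) with w̃ the normalized weights on the fiber π⁻¹(s_x). -/
open Filter

/-- Convergence of subspace estimated rewards (eq. (24) of Theorem 1's proof): the subspace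
estimated reward converges to a visitation-weighted average of the full-space expected rewards
of the aliased states. Here `N t s` is the visit count `n_t(s, a)` (for the fixed action `a`)
and `Rhat t s` the per-state empirical mean reward. -/
theorem stmt_18 {S Sx : Type*} [Fintype S] [DecidableEq Sx] (π : S → Sx)
    (N : ℕ → S → ℝ) (hN0 : ∀ t s, 0 ≤ N t s)
    (w : S → ℝ) (hw : ∀ s, 0 < w s) (hw1 : ∑ s, w s = 1)
    (hfreq : ∀ s, Tendsto (fun t : ℕ => N t s / (t : ℝ)) atTop (nhds (w s)))
    (Rhat : ℕ → S → ℝ) (R : S → ℝ)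
    (hR : ∀ s, Tendsto (fun t : ℕ => Rhat t s) atTop (nhds (R s)))
    (sx : Sx) :
    Tendsto (fun t : ℕ =>
        (∑ s ∈ Finset.univ.filter (fun s => π s = sx), N t s * Rhat t s) /
        (∑ s ∈ Finset.univ.filter (fun s => π s = sx), N t s))
      atTop
      (nhds (∑ s ∈ Finset.univ.filter (fun s => π s = sx),
        (w s / ∑ s'' ∈ Finset.univ.filter (fun s'' => π s'' = sx), w s'') * R s)) := by
  classical
  set F := Finset.univ.filter (fun s : S => π s = sx) with hF
  rcases F.eq_empty_or_nonempty with hFe | hFne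
  · simp [hFe]
  · set W := ∑ s ∈ F, w s with hW
    have hWpos : 0 < W := Finset.sum_pos (fun s _ => hw s) hFne
    -- limit of numerator/t and denominator/t
    have hnum : Tendsto (fun t : ℕ => ∑ s ∈ F, (N t s / (t : ℝ)) * Rhat t s)
        atTop (nhds (∑ s ∈ F, w s * R s)) :=
      tendsto_finset_sum _ (fun s _ => (hfreq s).mul (hR s))
    have hden : Tendsto (fun t : ℕ => ∑ s ∈ F, N t s / (t : ℝ)) atTop (nhds W) :=
      tendsto_finset_sum _ (fun s _ => hfreq s)
    have hdiv : Tendsto (fun t : ℕ =>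
        (∑ s ∈ F, (N t s / (t : ℝ)) * Rhat t s) / (∑ s ∈ F, N t s / (t : ℝ)))
        atTop (nhds ((∑ s ∈ F, w s * R s) / W)) :=
      hnum.div hden hWpos.ne'
    have htarget : (∑ s ∈ F, w s * R s) / W = ∑ s ∈ F, (w s / W) * R s := by
      rw [Finset.sum_div]
      congr 1; ext s; ring
    have heq : ∀ᶠ t : ℕ in atTop,
        (∑ s ∈ F, (N t s / (t : ℝ)) * Rhat t s) / (∑ s ∈ F, N t s / (t : ℝ)) =
        (∑ s ∈ F, N t s * Rhat t s) / (∑ s ∈ F, N t s) := by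
      filter_upwards [eventually_ge_atTop 1] with t ht
      have ht0 : (t : ℝ) ≠ 0 := by positivity
      have h1 : ∑ s ∈ F, (N t s / (t : ℝ)) * Rhat t s
          = (∑ s ∈ F, N t s * Rhat t s) / (t : ℝ) := by
        rw [Finset.sum_div]; congr 1; ext s; ring
      have h2 : ∑ s ∈ F, N t s / (t : ℝ) = (∑ s ∈ F, N t s) / (t : ℝ) := by
        rw [Finset.sum_div]
      rw [h1, h2]
      rcases eq_or_ne (∑ s ∈ F, N t s) 0 with h | h
      · simp [h]
      · field_simp
    have := (Tendsto.congr' heq hdiv)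
    rw [htarget] at this
    exact this
end

section
/- Let Q_u^{(n)} and Q_l^{(n)} be the fixed points of the optimistic and pessimistic Bellman operators with confidence radii ε_R(n) → 0 and ε_p(n) → 0 as n → ∞, and with estimated models (R̂_n, P̂_n) converging to (R, P) in sup and L1 norms respectively. Then both Q_u^{(n)} and Q_l^{(n)} converge in sup norm to Q*, the optimal Q-value function of the MDP (S, A, P, R, γ) with γ ∈ [0,1); in particular the confidence interval lengths Q_u^{(n)}(s,a) − Q_l^{(n)}(s,a) converge to 0 for every (s,a). -/
/-!
Write `V_Q(s) = max_a Q(s, a)`. The map `Q ↦ V_Q` is 1-Lipschitz in sup norm, so every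
optimistic or pessimistic backup `γ ⟨P̃, V_Q⟩` over a transition law `P̃` in the L1-ball of
radius `ε_p` around `P̂` lies within `γ (‖Q - Q*‖ + (ε_p + ‖P̂ - P‖₁) ‖Q*‖)` of the true backup
`γ ⟨P, V_{Q*}⟩`. Both `sSup` and `sInf` of such a set stay within the same distance, so the
fixed points satisfy `‖Q - Q*‖ ≤ ‖R̂ - R‖ + ε_R + γ ‖Q - Q*‖ + γ (ε_p + ‖P̂ - P‖₁) ‖Q*‖`,
and since `γ < 1` the error is at most `(1 - γ)⁻¹` times terms that all tend to `0`.
-/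

open Filter Topology

def ClosenessPreserving (agg : Set ℝ → ℝ) : Prop :=
  ∀ ⦃s : Set ℝ⦄ ⦃y c : ℝ⦄, s.Nonempty → (∀ x ∈ s, |x - y| ≤ c) → |agg s - y| ≤ c

lemma closenessPreserving_sSup : ClosenessPreserving sSup := by
  intro s y c hs h
  have hbdd : BddAbove s := ⟨y + c, fun x hx => by linarith [(abs_sub_le_iff.1 (h x hx)).1]⟩
  obtain ⟨x₀, hx₀⟩ := hs
  rw [abs_sub_le_iff]
  constructor
  · linarith [csSup_le ⟨x₀, hx₀⟩ fun x hx => show x ≤ y + c by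
      linarith [(abs_sub_le_iff.1 (h x hx)).1]]
  · linarith [le_csSup hbdd hx₀, (abs_sub_le_iff.1 (h x₀ hx₀)).2]

lemma closenessPreserving_sInf : ClosenessPreserving sInf := by
  intro s y c hs h
  have hbdd : BddBelow s := ⟨y - c, fun x hx => by linarith [(abs_sub_le_iff.1 (h x hx)).2]⟩
  obtain ⟨x₀, hx₀⟩ := hs
  rw [abs_sub_le_iff]
  constructor
  · linarith [csInf_le hbdd hx₀, (abs_sub_le_iff.1 (h x₀ hx₀)).1]
  · linarith [le_csInf ⟨x₀, hx₀⟩ fun x hx => show y - c ≤ x by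
      linarith [(abs_sub_le_iff.1 (h x hx)).2]]

lemma Finset.abs_sup'_sub_sup'_le {ι : Type*} {s : Finset ι} (hs : s.Nonempty) {f g : ι → ℝ}
    {c : ℝ} (h : ∀ i ∈ s, |f i - g i| ≤ c) : |s.sup' hs f - s.sup' hs g| ≤ c := by
  rw [abs_sub_le_iff]
  constructor
  · refine sub_left_le_of_le_add (Finset.sup'_le _ _ fun i hi => ?_)
    linarith [Finset.le_sup' g hi, (abs_sub_le_iff.1 (h i hi)).1]
  · refine sub_left_le_of_le_add (Finset.sup'_le _ _ fun i hi => ?_)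
    linarith [Finset.le_sup' f hi, (abs_sub_le_iff.1 (h i hi)).2]

section Bellman

variable {S A : Type*} [Fintype S]

lemma abs_sum_mul_sub_sum_mul_le {p q f g : S → ℝ} (hp0 : ∀ s, 0 ≤ p s) (hp1 : ∑ s, p s = 1) :
    |∑ s, p s * f s - ∑ s, q s * g s| ≤ ‖f - g‖ + (∑ s, |p s - q s|) * ‖g‖ := by
  have hsplit : ∑ s, p s * f s - ∑ s, q s * g s =
      ∑ s, p s * (f s - g s) + ∑ s, (p s - q s) * g s := by
    rw [← Finset.sum_sub_distrib, ← Finset.sum_add_distrib]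
    exact Finset.sum_congr rfl fun s _ => by ring
  have hfg : |∑ s, p s * (f s - g s)| ≤ ‖f - g‖ :=
    calc |∑ s, p s * (f s - g s)| ≤ ∑ s, p s * ‖f - g‖ := by
          refine (Finset.abs_sum_le_sum_abs _ _).trans (Finset.sum_le_sum fun s _ => ?_)
          rw [abs_mul, abs_of_nonneg (hp0 s)]
          exact mul_le_mul_of_nonneg_left (norm_le_pi_norm (f - g) s) (hp0 s)
      _ = ‖f - g‖ := by rw [← Finset.sum_mul, hp1, one_mul]
  have hpq : |∑ s, (p s - q s) * g s| ≤ (∑ s, |p s - q s|) * ‖g‖ := by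
    rw [Finset.sum_mul]
    refine (Finset.abs_sum_le_sum_abs _ _).trans (Finset.sum_le_sum fun s _ => ?_)
    rw [abs_mul]
    exact mul_le_mul_of_nonneg_left (norm_le_pi_norm g s) (abs_nonneg _)
  rw [hsplit]
  exact (abs_add_le _ _).trans (add_le_add hfg hpq)

variable [Fintype A] [Nonempty A]

def greedyValue (Q : S × A → ℝ) (s : S) : ℝ :=
  Finset.univ.sup' Finset.univ_nonempty fun a => Q (s, a)

lemma norm_greedyValue_sub_le (Q Q' : S × A → ℝ) :
    ‖greedyValue Q - greedyValue Q'‖ ≤ ‖Q - Q'‖ :=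
  (pi_norm_le_iff_of_nonneg (norm_nonneg _)).2 fun s =>
    Finset.abs_sup'_sub_sup'_le _ fun a _ => norm_le_pi_norm (Q - Q') (s, a)

lemma norm_greedyValue_le (Q : S × A → ℝ) : ‖greedyValue Q‖ ≤ ‖Q‖ := by
  have hzero : greedyValue (0 : S × A → ℝ) = 0 := funext fun _ => Finset.sup'_const _ _
  simpa [hzero] using norm_greedyValue_sub_le Q 0

def plausibleBackups (γ : ℝ) (p : S → ℝ) (ε : ℝ) (V : S → ℝ) : Set ℝ :=
  {x : ℝ | ∃ Pt : S → ℝ, (∀ s', 0 ≤ Pt s') ∧ (∑ s', Pt s') = 1 ∧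
    (∑ s', |Pt s' - p s'|) ≤ ε ∧ x = γ * ∑ s', Pt s' * V s'}

lemma plausibleBackups_nonempty {γ ε : ℝ} {p : S → ℝ} (hp0 : ∀ s, 0 ≤ p s)
    (hp1 : ∑ s, p s = 1) (hε : 0 ≤ ε) (V : S → ℝ) : (plausibleBackups γ p ε V).Nonempty :=
  ⟨_, p, hp0, hp1, by simpa using hε, rfl⟩

lemma abs_sub_le_of_mem_plausibleBackups {γ ε x : ℝ} {p' p V W : S → ℝ} (hγ : 0 ≤ γ)
    (hx : x ∈ plausibleBackups γ p' ε V) :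
    |x - γ * ∑ s, p s * W s| ≤ γ * (‖V - W‖ + (ε + ∑ s, |p' s - p s|) * ‖W‖) := by
  obtain ⟨Pt, hPt0, hPt1, hPtε, rfl⟩ := hx
  have hdist : ∑ s, |Pt s - p s| ≤ ε + ∑ s, |p' s - p s| :=
    calc ∑ s, |Pt s - p s| ≤ ∑ s, (|Pt s - p' s| + |p' s - p s|) :=
          Finset.sum_le_sum fun s _ => abs_sub_le _ _ _
      _ ≤ ε + ∑ s, |p' s - p s| := by rw [Finset.sum_add_distrib]; linarith
  rw [← mul_sub, abs_mul, abs_of_nonneg hγ]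
  gcongr
  exact (abs_sum_mul_sub_sum_mul_le hPt0 hPt1).trans (by gcongr)

variable {γ σ ε : ℝ} {R R' : S → A → ℝ} {P P' : S → A → S → ℝ} {agg : Set ℝ → ℝ}
  {Q Qstar : S × A → ℝ}

lemma norm_sub_le_of_robustBellman (hγ : 0 ≤ γ) (hP'0 : ∀ s a s', 0 ≤ P' s a s')
    (hP'1 : ∀ s a, ∑ s', P' s a s' = 1) (hε : 0 ≤ ε) (hagg : ClosenessPreserving agg)
    (hQ : ∀ sa : S × A, Q sa = (R' sa.1 sa.2 + σ) +
      agg (plausibleBackups γ (P' sa.1 sa.2) ε (greedyValue Q)))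
    (hQstar : ∀ sa : S × A, Qstar sa = R sa.1 sa.2 + γ * ∑ s', P sa.1 sa.2 s' *
      greedyValue Qstar s') :
    ‖Q - Qstar‖ ≤ ‖fun sa : S × A => R' sa.1 sa.2 - R sa.1 sa.2‖ + |σ| +
      γ * (‖Q - Qstar‖ +
        (ε + ‖fun sa : S × A => ∑ s', |P' sa.1 sa.2 s' - P sa.1 sa.2 s'|‖) * ‖Qstar‖) := by
  refine (pi_norm_le_iff_of_nonneg (by positivity)).2 fun sa => ?_
  have hR := norm_le_pi_norm (fun sa : S × A => R' sa.1 sa.2 - R sa.1 sa.2) sa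
  have hP := (le_abs_self _).trans
    (norm_le_pi_norm (fun sa : S × A => ∑ s', |P' sa.1 sa.2 s' - P sa.1 sa.2 s'|) sa)
  have hbackup : |agg (plausibleBackups γ (P' sa.1 sa.2) ε (greedyValue Q)) -
      γ * ∑ s', P sa.1 sa.2 s' * greedyValue Qstar s'| ≤ γ * (‖Q - Qstar‖ +
        (ε + ‖fun sa : S × A => ∑ s', |P' sa.1 sa.2 s' - P sa.1 sa.2 s'|‖) * ‖Qstar‖) :=
    hagg (plausibleBackups_nonempty (hP'0 sa.1 sa.2) (hP'1 sa.1 sa.2) hε _) fun x hx =>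
      (abs_sub_le_of_mem_plausibleBackups hγ hx).trans <| by
        gcongr
        exacts [norm_greedyValue_sub_le Q Qstar, norm_greedyValue_le Qstar]
  rw [Real.norm_eq_abs] at hR ⊢
  calc |(Q - Qstar) sa|
      = |(R' sa.1 sa.2 - R sa.1 sa.2) + σ + (agg (plausibleBackups γ (P' sa.1 sa.2) ε
          (greedyValue Q)) - γ * ∑ s', P sa.1 sa.2 s' * greedyValue Qstar s')| := by
        rw [Pi.sub_apply, hQ sa, hQstar sa]; congr 1; ring
    _ ≤ _ := (abs_add_three _ _ _).trans (by gcongr)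

lemma norm_sub_le_div_of_robustBellman (hγ0 : 0 ≤ γ) (hγ1 : γ < 1)
    (hP'0 : ∀ s a s', 0 ≤ P' s a s') (hP'1 : ∀ s a, ∑ s', P' s a s' = 1) (hε : 0 ≤ ε)
    (hagg : ClosenessPreserving agg)
    (hQ : ∀ sa : S × A, Q sa = (R' sa.1 sa.2 + σ) +
      agg (plausibleBackups γ (P' sa.1 sa.2) ε (greedyValue Q)))
    (hQstar : ∀ sa : S × A, Qstar sa = R sa.1 sa.2 + γ * ∑ s', P sa.1 sa.2 s' *
      greedyValue Qstar s') :
    ‖Q - Qstar‖ ≤ (‖fun sa : S × A => R' sa.1 sa.2 - R sa.1 sa.2‖ + |σ| +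
      γ * (ε + ‖fun sa : S × A => ∑ s', |P' sa.1 sa.2 s' - P sa.1 sa.2 s'|‖) * ‖Qstar‖) /
        (1 - γ) := by
  rw [le_div_iff₀ (sub_pos.2 hγ1)]
  linarith [norm_sub_le_of_robustBellman hγ0 hP'0 hP'1 hε hagg hQ hQstar]

theorem tendsto_robustBellman_fixedPoint (hγ0 : 0 ≤ γ) (hγ1 : γ < 1)
    {Rn : ℕ → S → A → ℝ} {Pn : ℕ → S → A → S → ℝ}
    (hPn0 : ∀ n s a s', 0 ≤ Pn n s a s') (hPn1 : ∀ n s a, ∑ s', Pn n s a s' = 1)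
    (hRconv : ∀ s a, Tendsto (fun n => Rn n s a) atTop (𝓝 (R s a)))
    (hPconv : ∀ s a, Tendsto (fun n => ∑ s', |Pn n s a s' - P s a s'|) atTop (𝓝 0))
    {σn εn : ℕ → ℝ} (hσn : Tendsto σn atTop (𝓝 0)) (hεn0 : ∀ n, 0 ≤ εn n)
    (hεn : Tendsto εn atTop (𝓝 0)) (hagg : ClosenessPreserving agg) {Qn : ℕ → S × A → ℝ}
    (hQn : ∀ n (sa : S × A), Qn n sa = (Rn n sa.1 sa.2 + σn n) +
      agg (plausibleBackups γ (Pn n sa.1 sa.2) (εn n) (greedyValue (Qn n))))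
    (hQstar : ∀ sa : S × A, Qstar sa = R sa.1 sa.2 + γ * ∑ s', P sa.1 sa.2 s' *
      greedyValue Qstar s') :
    Tendsto Qn atTop (𝓝 Qstar) := by
  have hR : Tendsto (fun n (sa : S × A) => Rn n sa.1 sa.2 - R sa.1 sa.2) atTop (𝓝 0) :=
    tendsto_pi_nhds.2 fun sa => tendsto_sub_nhds_zero_iff.2 (hRconv sa.1 sa.2)
  have hP : Tendsto (fun n (sa : S × A) => ∑ s', |Pn n sa.1 sa.2 s' - P sa.1 sa.2 s'|) atTop
      (𝓝 0) :=
    tendsto_pi_nhds.2 fun sa => hPconv sa.1 sa.2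
  have hbound := (((hR.norm.add hσn.abs).add (((hεn.add hP.norm).const_mul γ).mul_const ‖Qstar‖)).div_const
    (1 - γ))
  simp only [norm_zero, abs_zero, add_zero, mul_zero, zero_mul, zero_div] at hbound
  exact tendsto_iff_norm_sub_tendsto_zero.2 <| squeeze_zero (fun _ => norm_nonneg _)
    (fun n => norm_sub_le_div_of_robustBellman hγ0 hγ1 (hPn0 n) (hPn1 n) (hεn0 n) hagg
      (hQn n) hQstar) hbound

end Bellman

theorem stmt_19_general {S A : Type*} [Fintype S] [Fintype A] [Nonempty S] [Nonempty A]
    (γ : ℝ) (hγ : γ ∈ Set.Ico (0 : ℝ) 1)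
    (R : S → A → ℝ) (P : S → A → S → ℝ)
    (Rn : ℕ → S → A → ℝ) (Pn : ℕ → S → A → S → ℝ)
    (hPn0 : ∀ n s a s', 0 ≤ Pn n s a s') (hPn1 : ∀ n s a, ∑ s', Pn n s a s' = 1)
    (hRconv : ∀ s a, Tendsto (fun n => Rn n s a) atTop (nhds (R s a)))
    (hPconv : ∀ s a, Tendsto (fun n => ∑ s', |Pn n s a s' - P s a s'|) atTop (nhds 0))
    (εR εp : ℕ → ℝ) (hεp0 : ∀ n, 0 ≤ εp n)
    (hεR : Tendsto εR atTop (nhds 0)) (hεp : Tendsto εp atTop (nhds 0))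
    (Qu Ql : ℕ → S × A → ℝ)
    (hQu : ∀ n (sa : S × A), Qu n sa = (Rn n sa.1 sa.2 + εR n) +
      sSup {x : ℝ | ∃ Pt : S → ℝ, (∀ s', 0 ≤ Pt s') ∧ (∑ s', Pt s') = 1 ∧
        (∑ s', |Pt s' - Pn n sa.1 sa.2 s'|) ≤ εp n ∧
        x = γ * ∑ s', Pt s' *
          (Finset.univ.sup' Finset.univ_nonempty (fun a' => Qu n (s', a')))})
    (hQl : ∀ n (sa : S × A), Ql n sa = (Rn n sa.1 sa.2 - εR n) +
      sInf {x : ℝ | ∃ Pt : S → ℝ, (∀ s', 0 ≤ Pt s') ∧ (∑ s', Pt s') = 1 ∧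
        (∑ s', |Pt s' - Pn n sa.1 sa.2 s'|) ≤ εp n ∧
        x = γ * ∑ s', Pt s' *
          (Finset.univ.sup' Finset.univ_nonempty (fun a' => Ql n (s', a')))})
    (Qstar : S × A → ℝ)
    (hQstar : ∀ sa : S × A, Qstar sa = R sa.1 sa.2 + γ * ∑ s', P sa.1 sa.2 s' *
      (Finset.univ.sup' Finset.univ_nonempty (fun a' => Qstar (s', a')))) :
    Tendsto (fun n => ‖Qu n - Qstar‖) atTop (nhds 0)
    ∧ Tendsto (fun n => ‖Ql n - Qstar‖) atTop (nhds 0)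
    ∧ ∀ sa : S × A, Tendsto (fun n => Qu n sa - Ql n sa) atTop (nhds 0) := by
  obtain ⟨hγ0, hγ1⟩ := hγ
  have hu : Tendsto Qu atTop (𝓝 Qstar) :=
    tendsto_robustBellman_fixedPoint hγ0 hγ1 hPn0 hPn1 hRconv hPconv hεR hεp0 hεp
      closenessPreserving_sSup hQu hQstar
  have hl : Tendsto Ql atTop (𝓝 Qstar) :=
    tendsto_robustBellman_fixedPoint hγ0 hγ1 hPn0 hPn1 hRconv hPconv (by simpa using hεR.neg)
      hεp0 hεp closenessPreserving_sInf (fun n sa => by rw [hQl n sa, sub_eq_add_neg]; rfl)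
      hQstar
  refine ⟨tendsto_iff_norm_sub_tendsto_zero.1 hu, tendsto_iff_norm_sub_tendsto_zero.1 hl,
    fun sa => ?_⟩
  simpa using (tendsto_pi_nhds.1 hu sa).sub (tendsto_pi_nhds.1 hl sa)

/-- Shrinking confidence intervals (proof of Theorem 1): as the confidence radii tend to `0`
and the estimated model converges to the true model, the fixed points of the optimistic and
pessimistic Bellman operators converge in sup norm to the true optimal Q-values `Q*`; in
particular the confidence-interval lengths `Q_u - Q_l` converge to `0` pointwise. -/
theorem stmt_19 {S A : Type*} [Fintype S] [Fintype A] [Nonempty S] [Nonempty A]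
    (γ : ℝ) (hγ : γ ∈ Set.Ico (0 : ℝ) 1)
    (R : S → A → ℝ) (P : S → A → S → ℝ)
    (hP0 : ∀ s a s', 0 ≤ P s a s') (hP1 : ∀ s a, ∑ s', P s a s' = 1)
    (Rn : ℕ → S → A → ℝ) (Pn : ℕ → S → A → S → ℝ)
    (hPn0 : ∀ n s a s', 0 ≤ Pn n s a s') (hPn1 : ∀ n s a, ∑ s', Pn n s a s' = 1)
    (hRconv : ∀ s a, Tendsto (fun n => Rn n s a) atTop (nhds (R s a)))
    (hPconv : ∀ s a, Tendsto (fun n => ∑ s', |Pn n s a s' - P s a s'|) atTop (nhds 0))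
    (εR εp : ℕ → ℝ) (hεR0 : ∀ n, 0 ≤ εR n) (hεp0 : ∀ n, 0 ≤ εp n)
    (hεR : Tendsto εR atTop (nhds 0)) (hεp : Tendsto εp atTop (nhds 0))
    (Qu Ql : ℕ → S × A → ℝ)
    (hQu : ∀ n (sa : S × A), Qu n sa = (Rn n sa.1 sa.2 + εR n) +
      sSup {x : ℝ | ∃ Pt : S → ℝ, (∀ s', 0 ≤ Pt s') ∧ (∑ s', Pt s') = 1 ∧
        (∑ s', |Pt s' - Pn n sa.1 sa.2 s'|) ≤ εp n ∧
        x = γ * ∑ s', Pt s' *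
          (Finset.univ.sup' Finset.univ_nonempty (fun a' => Qu n (s', a')))})
    (hQl : ∀ n (sa : S × A), Ql n sa = (Rn n sa.1 sa.2 - εR n) +
      sInf {x : ℝ | ∃ Pt : S → ℝ, (∀ s', 0 ≤ Pt s') ∧ (∑ s', Pt s') = 1 ∧
        (∑ s', |Pt s' - Pn n sa.1 sa.2 s'|) ≤ εp n ∧
        x = γ * ∑ s', Pt s' *
          (Finset.univ.sup' Finset.univ_nonempty (fun a' => Ql n (s', a')))})
    (Qstar : S × A → ℝ)
    (hQstar : ∀ sa : S × A, Qstar sa = R sa.1 sa.2 + γ * ∑ s', P sa.1 sa.2 s' *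
      (Finset.univ.sup' Finset.univ_nonempty (fun a' => Qstar (s', a')))) :
    Tendsto (fun n => ‖Qu n - Qstar‖) atTop (nhds 0)
    ∧ Tendsto (fun n => ‖Ql n - Qstar‖) atTop (nhds 0)
    ∧ ∀ sa : S × A, Tendsto (fun n => Qu n sa - Ql n sa) atTop (nhds 0) :=
  stmt_19_general γ hγ R P Rn Pn hPn0 hPn1 hRconv hPconv εR εp hεp0 hεR hεp Qu Ql hQu hQl Qstar
    hQstar
end
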